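/- Let K be ℝ or ℂ and let sl_2(K[λ]) denote the Lie algebra of 2×2 trace-zero matrices with entries in the polynomial ring K[λ], regarded as a Lie algebra over K. Then every Lie ideal I of sl_2(K[λ]) that is nilpotent as a Lie algebra is the zero ideal. (In particular, the infinite-dimensional Lie algebra sl_2(K[λ]) has no nontrivial nilpotent ideals.) -/

import Mathlib

noncomputable section

/-- `2×2` matrices over the polynomial ring `K[λ]`; `sl₂(K[λ])` is its trace-zero
part, a Lie algebra over `K` under the matrix commutator `[x,y] = xy − yx`. -/
abbrev MatP (K : Type*) [RCLike K] := Matrix (Fin 2) (Fin 2) (Polynomial K)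

/-- The lower central series of a `K`-subspace `I` (with respect to the matrix
commutator): `C_0 = I`, `C_{j+1} = span_K {[x,y] | x ∈ I, y ∈ C_j}`.  `I` is nilpotent
as a Lie algebra iff this series reaches `⊥` in finitely many steps. -/
def lcsMat (K : Type*) [RCLike K] (I : Submodule K (MatP K)) : ℕ → Submodule K (MatP K)
  | 0 => I
  | j + 1 => Submodule.span K
      {z : MatP K | ∃ x ∈ I, ∃ y ∈ lcsMat K I j, z = x * y - y * x}


lemma key (K : Type*) [RCLike K] (y : MatP K) (hy : Matrix.trace y = 0)
    (h : ∀ z : MatP K, Matrix.trace z = 0 →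
      (z * y - y * z) * y - y * (z * y - y * z) = 0) : y = 0 := by
  have htr : y 1 1 = - y 0 0 := by
    have h2 := hy
    simp [Matrix.trace, Matrix.diag, Fin.sum_univ_two] at h2
    linear_combination h2
  have hz1 : Matrix.trace (Matrix.single (0:Fin 2) (1:Fin 2) (1:Polynomial K)) = 0 := by
    exact Matrix.trace_single_eq_of_ne _ _ _ (by decide)
  have hz2 : Matrix.trace (Matrix.single (1:Fin 2) (0:Fin 2) (1:Polynomial K)) = 0 := by
    exact Matrix.trace_single_eq_of_ne _ _ _ (by decide)
  have H1 := h _ hz1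
  have H2 := h _ hz2
  -- entry (1,0) of H1 gives c relation
  have e1 := congrFun (congrFun H1 1) 0
  have e2 := congrFun (congrFun H1 0) 1
  have e3 := congrFun (congrFun H2 0) 1
  simp [Matrix.mul_apply, Fin.sum_univ_two, Matrix.single, Matrix.sub_apply, htr] at e1 e2 e3
  have hc : y 1 0 = 0 := by
    have h2c : (2:Polynomial K) * (y 1 0 * y 1 0) = 0 := by linear_combination -e1
    have := mul_eq_zero.mp h2c
    rcases this with h' | h'
    · exact absurd h' (by norm_num)
    · exact mul_self_eq_zero.mp h'
  have hb : y 0 1 = 0 := by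
    have h2b : (2:Polynomial K) * (y 0 1 * y 0 1) = 0 := by linear_combination -e3
    rcases mul_eq_zero.mp h2b with h' | h'
    · exact absurd h' (by norm_num)
    · exact mul_self_eq_zero.mp h'
  have ha : y 0 0 = 0 := by
    have h4a : (4:Polynomial K) * (y 0 0 * y 0 0) = 0 := by
      rw [hb, hc] at e2; linear_combination e2
    rcases mul_eq_zero.mp h4a with h' | h'
    · exact absurd h' (by norm_num)
    · exact mul_self_eq_zero.mp h'
  ext i j
  fin_cases i <;> fin_cases j <;> simp [ha, hb, hc, htr]

/-- every Lie ideal of `sl₂(K[λ])` (a `K`-subspace `I` of trace-zero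
matrices with `[sl₂(K[λ]), I] ⊆ I`) that is nilpotent as a Lie algebra is zero. -/
theorem statement14 (K : Type*) [RCLike K] (I : Submodule K (MatP K))
    (htr : ∀ x ∈ I, Matrix.trace x = 0)
    (hideal : ∀ x : MatP K, Matrix.trace x = 0 → ∀ y ∈ I, x * y - y * x ∈ I)
    (hnilp : ∃ j, lcsMat K I j = ⊥) :
    I = ⊥ := by
  have hle : ∀ j, lcsMat K I j ≤ I := by
    intro j
    induction j with
    | zero => exact le_rfl
    | succ j ih =>
      rw [lcsMat]
      apply Submodule.span_le.mpr
      rintro z ⟨x, hx, y, hy, rfl⟩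
      exact hideal x (htr x hx) y (ih hy)
  by_contra hI
  have hne : ∀ j, lcsMat K I j ≠ ⊥ := by
    intro j
    induction j with
    | zero => exact hI
    | succ j ih =>
      obtain ⟨y, hyC, hy0⟩ := Submodule.exists_mem_ne_zero_of_ne_bot ih
      have hyI : y ∈ I := hle j hyC
      have hytr : Matrix.trace y = 0 := htr y hyI
      -- find z with [[z,y],y] ≠ 0
      have : ¬ (∀ z : MatP K, Matrix.trace z = 0 →
          (z * y - y * z) * y - y * (z * y - y * z) = 0) := by
        intro hall
        exact hy0 (key K y hytr hall)
      push_neg at this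
      obtain ⟨z, hztr, hzne⟩ := this
      have hxI : z * y - y * z ∈ I := hideal z hztr y hyI
      have hmem : (z * y - y * z) * y - y * (z * y - y * z) ∈ lcsMat K I (j + 1) := by
        rw [lcsMat]
        exact Submodule.subset_span ⟨z * y - y * z, hxI, y, hyC, rfl⟩
      intro hbot
      rw [hbot, Submodule.mem_bot] at hmem
      exact hzne hmem
  obtain ⟨j, hj⟩ := hnilp
  exact hne j hj
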